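/- arXiv:2312.12882 — 4 statements merged into one kernel-verified Lean document; each statement's English description precedes it below -/
import Mathlib

section
/- For a finite probability distribution p on a finite type with p_j > 0 for all j, a real-valued function f, and α > 0, the supremum over probability distributions q of (∑_j q_j f_j − α·KL(q‖p)) equals α·log(∑_j p_j·exp(f_j/α)), where KL(q‖p) = ∑_j q_j·log(q_j/p_j). -/
open Finset

theorem dro_kl_duality {ι : Type*} [Fintype ι] [Nonempty ι]
    (p : ι → ℝ) (hp0 : ∀ j, 0 < p j) (hp1 : ∑ j, p j = 1)
    (f : ι → ℝ) (α : ℝ) (hα : 0 < α) :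
    sSup {z : ℝ | ∃ q : ι → ℝ, (∀ j, 0 ≤ q j) ∧ (∑ j, q j = 1) ∧
        z = (∑ j, q j * f j) - α * ∑ j, q j * Real.log (q j / p j)}
      = α * Real.log (∑ j, p j * Real.exp (f j / α)) := by
  set Z : ℝ := ∑ j, p j * Real.exp (f j / α) with hZdef
  have hZpos : 0 < Z :=
    Finset.sum_pos (fun j _ => mul_pos (hp0 j) (Real.exp_pos _)) Finset.univ_nonempty
  set r : ι → ℝ := fun j => p j * Real.exp (f j / α) / Z with hrdef
  have hr0 : ∀ j, 0 < r j := fun j => div_pos (mul_pos (hp0 j) (Real.exp_pos _)) hZpos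
  have hr1 : ∑ j, r j = 1 := by
    rw [hrdef, ← Finset.sum_div, ← hZdef, div_self hZpos.ne']
  have hlogr : ∀ j, Real.log (r j / p j) = f j / α - Real.log Z := by
    intro j
    have : r j / p j = Real.exp (f j / α) / Z := by
      rw [hrdef]
      dsimp only
      rw [div_right_comm, mul_div_cancel_left₀ _ (hp0 j).ne']
    rw [this, Real.log_div (Real.exp_ne_zero _) hZpos.ne', Real.log_exp]
  apply IsGreatest.csSup_eq
  constructor
  · refine ⟨r, fun j => (hr0 j).le, hr1, ?_⟩
    have hsum : ∑ j, r j * Real.log (r j / p j) = (∑ j, r j * f j) / α - Real.log Z := by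
      calc ∑ j, r j * Real.log (r j / p j) = ∑ j, (r j * f j / α - r j * Real.log Z) := by
            refine Finset.sum_congr rfl fun j _ => ?_
            rw [hlogr j]; ring
        _ = (∑ j, r j * f j) / α - Real.log Z := by
            rw [Finset.sum_sub_distrib, ← Finset.sum_div, ← Finset.sum_mul, hr1, one_mul]
    rw [hsum]
    field_simp
    ring
  · rintro z ⟨q, hq0, hq1, rfl⟩
    have key : ∀ j, q j * (f j / α - Real.log Z) - q j * Real.log (q j / p j) ≤ r j - q j := by
      intro j
      rcases eq_or_lt_of_le (hq0 j) with h | h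
      · simp [← h, (hr0 j).le]
      · have h1 : f j / α - Real.log Z - Real.log (q j / p j) = Real.log (r j / q j) := by
          rw [← hlogr j, Real.log_div (hr0 j).ne' h.ne', Real.log_div h.ne' (hp0 j).ne',
            Real.log_div (hr0 j).ne' (hp0 j).ne']
          ring
        have h2 : q j * (f j / α - Real.log Z) - q j * Real.log (q j / p j)
            = q j * Real.log (r j / q j) := by rw [← h1]; ring
        rw [h2]
        have h3 : Real.log (r j / q j) ≤ r j / q j - 1 :=
          Real.log_le_sub_one_of_pos (div_pos (hr0 j) h)
        calc q j * Real.log (r j / q j) ≤ q j * (r j / q j - 1) :=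
              mul_le_mul_of_nonneg_left h3 (hq0 j)
          _ = r j - q j := by field_simp
    have hsum0 : ∑ j, (q j * (f j / α - Real.log Z) - q j * Real.log (q j / p j)) ≤ 0 := by
      calc ∑ j, (q j * (f j / α - Real.log Z) - q j * Real.log (q j / p j))
          ≤ ∑ j, (r j - q j) := Finset.sum_le_sum fun j _ => key j
        _ = 0 := by rw [Finset.sum_sub_distrib, hr1, hq1, sub_self]
    have expand : ∑ j, (q j * (f j / α - Real.log Z) - q j * Real.log (q j / p j))
        = (∑ j, q j * f j) / α - Real.log Z - ∑ j, q j * Real.log (q j / p j) := by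
      rw [Finset.sum_sub_distrib]
      congr 1
      calc ∑ j, q j * (f j / α - Real.log Z)
          = ∑ j, (q j * f j / α - Real.log Z * q j) :=
            Finset.sum_congr rfl fun j _ => by ring
        _ = (∑ j, q j * f j) / α - Real.log Z * ∑ j, q j := by
            rw [Finset.sum_sub_distrib, Finset.sum_div, Finset.mul_sum]
        _ = (∑ j, q j * f j) / α - Real.log Z := by rw [hq1, mul_one]
    rw [expand] at hsum0
    have h4 : α * ((∑ j, q j * f j) / α) = ∑ j, q j * f j := by field_simp
    nlinarith [mul_le_mul_of_nonneg_left hsum0 hα.le, h4]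
end

section
/- For a finite probability distribution p with full support, f : ι → ℝ, α > 0, and robustness radius η ≥ 0, the supremum of ∑_j q_j f_j over probability distributions q with KL(q‖p) ≤ η is at most α·log(∑_j p_j·exp(f_j/α)) + α·η. -/
open Finset

theorem dro_radius_bound {ι : Type*} [Fintype ι] [Nonempty ι]
    (p : ι → ℝ) (hp0 : ∀ j, 0 < p j) (hp1 : ∑ j, p j = 1)
    (f : ι → ℝ) (α η : ℝ) (hα : 0 < α) (hη : 0 ≤ η)
    (q : ι → ℝ) (hq0 : ∀ j, 0 ≤ q j) (hq1 : ∑ j, q j = 1)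
    (hkl : ∑ j, q j * Real.log (q j / p j) ≤ η) :
    ∑ j, q j * f j ≤ α * Real.log (∑ j, p j * Real.exp (f j / α)) + α * η := by
  set Z := ∑ j, p j * Real.exp (f j / α) with hZ
  have hZpos : 0 < Z :=
    Finset.sum_pos (fun j _ => mul_pos (hp0 j) (Real.exp_pos _)) univ_nonempty
  have key : ∀ j, q j * (f j / α) - q j * Real.log (q j / p j) - q j * Real.log Z ≤
      p j * Real.exp (f j / α) / Z - q j := by
    intro j
    rcases eq_or_lt_of_le (hq0 j) with h | h
    · rw [← h]
      simp only [zero_mul, sub_zero, zero_div, sub_zero, zero_sub, neg_zero]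
      exact le_of_lt (div_pos (mul_pos (hp0 j) (Real.exp_pos _)) hZpos)
    · have hx : 0 < p j * Real.exp (f j / α) / (q j * Z) := div_pos (mul_pos (hp0 j) (Real.exp_pos _)) (mul_pos h hZpos)
      have hlog := Real.log_le_sub_one_of_pos hx
      have expand : Real.log (p j * Real.exp (f j / α) / (q j * Z)) =
          f j / α - Real.log (q j / p j) - Real.log Z := by
        rw [Real.log_div (ne_of_gt (mul_pos (hp0 j) (Real.exp_pos _))) (ne_of_gt (mul_pos h hZpos)),
          Real.log_mul (ne_of_gt (hp0 j)) (Real.exp_ne_zero _), Real.log_exp,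
          Real.log_mul (ne_of_gt h) (ne_of_gt hZpos),
          Real.log_div (ne_of_gt h) (ne_of_gt (hp0 j))]
        ring
      have h2 := mul_le_mul_of_nonneg_left hlog (le_of_lt h)
      rw [expand] at h2
      calc q j * (f j / α) - q j * Real.log (q j / p j) - q j * Real.log Z
          = q j * (f j / α - Real.log (q j / p j) - Real.log Z) := by ring
        _ ≤ q j * (p j * Real.exp (f j / α) / (q j * Z) - 1) := h2
        _ = p j * Real.exp (f j / α) / Z - q j := by
            field_simp
  have sum_key := Finset.sum_le_sum (fun j (_ : j ∈ univ) => key j)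
  rw [Finset.sum_sub_distrib, Finset.sum_sub_distrib, Finset.sum_sub_distrib,
    ← Finset.sum_div, ← Finset.sum_mul, hq1, one_mul] at sum_key
  rw [div_self (ne_of_gt hZpos)] at sum_key
  have h3 : ∑ j, q j * (f j / α) ≤ Real.log Z + ∑ j, q j * Real.log (q j / p j) := by
    linarith
  have h4 : ∑ j, q j * (f j / α) = (∑ j, q j * f j) / α := by
    rw [Finset.sum_div]
    congr 1; ext j; ring
  rw [h4] at h3
  have h5 : (∑ j, q j * f j) / α ≤ Real.log Z + η := le_trans h3 (by linarith)
  have := mul_le_mul_of_nonneg_left h5 (le_of_lt hα)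
  rw [mul_div_cancel₀ _ (ne_of_gt hα)] at this
  linarith [this, mul_le_mul_of_nonneg_left hkl (le_of_lt hα)]
end

section
/- The map α ↦ α·log(∑_j p_j·exp(f_j/α)) is monotonically nonincreasing in α on (0, ∞). -/
open Finset

theorem smoothed_max_antitone {ι : Type*} [Fintype ι] [Nonempty ι]
    (p : ι → ℝ) (hp0 : ∀ j, 0 < p j) (hp1 : ∑ j, p j = 1) (f : ι → ℝ) :
    AntitoneOn (fun α : ℝ => α * Real.log (∑ j, p j * Real.exp (f j / α))) (Set.Ioi 0) := by
  intro a ha b hb hab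
  simp only [Set.mem_Ioi] at ha hb
  have hq : (1:ℝ) ≤ b / a := (one_le_div ha).2 hab
  have key := Real.arith_mean_le_rpow_mean (univ : Finset ι) p
    (fun j => Real.exp (f j / b)) (fun i _ => (hp0 i).le) hp1
    (fun i _ => (Real.exp_pos _).le) hq
  have hrw : ∀ j, Real.exp (f j / b) ^ (b / a) = Real.exp (f j / a) := by
    intro j
    rw [← Real.exp_mul]
    congr 1
    field_simp
  simp only [hrw, one_div_div] at key
  have hSa : 0 < ∑ j, p j * Real.exp (f j / a) :=
    Finset.sum_pos (fun j _ => mul_pos (hp0 j) (Real.exp_pos _)) univ_nonempty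
  have hSb : 0 < ∑ j, p j * Real.exp (f j / b) :=
    Finset.sum_pos (fun j _ => mul_pos (hp0 j) (Real.exp_pos _)) univ_nonempty
  have hlog : Real.log (∑ j, p j * Real.exp (f j / b)) ≤
      (a / b) * Real.log (∑ j, p j * Real.exp (f j / a)) := by
    calc Real.log (∑ j, p j * Real.exp (f j / b))
        ≤ Real.log ((∑ j, p j * Real.exp (f j / a)) ^ (a / b)) :=
          Real.log_le_log hSb key
      _ = (a / b) * Real.log (∑ j, p j * Real.exp (f j / a)) := Real.log_rpow hSa _
  have := mul_le_mul_of_nonneg_left hlog hb.le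
  calc b * Real.log (∑ j, p j * Real.exp (f j / b))
      ≤ b * ((a / b) * Real.log (∑ j, p j * Real.exp (f j / a))) := this
    _ = a * Real.log (∑ j, p j * Real.exp (f j / a)) := by
        field_simp
end

section
/- For 0 < α₁ ≤ α₂ and the tilted distributions q^{α} with q^{α}_j ∝ p_j·exp(f_j/α), the expected score is monotone: ∑_j q^{α₁}_j f_j ≥ ∑_j q^{α₂}_j f_j. -/
open Finset

lemma key_double_sum {ι : Type*} [Fintype ι] (p f : ι → ℝ) (hp : ∀ j, 0 ≤ p j)
    (b₁ b₂ : ℝ) (h : b₂ ≤ b₁) :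
    0 ≤ ∑ j, ∑ k, p j * p k * (f j - f k) *
      (Real.exp (b₁ * f j) * Real.exp (b₂ * f k)) := by
  set F : ι → ι → ℝ := fun j k => p j * p k * (f j - f k) *
      (Real.exp (b₁ * f j) * Real.exp (b₂ * f k)) with hF
  have hswap : ∑ j, ∑ k, F j k = ∑ j, ∑ k, F k j := Finset.sum_comm
  have h2 : 2 * (∑ j, ∑ k, F j k) = ∑ j, ∑ k, (F j k + F k j) := by
    simp only [Finset.sum_add_distrib]
    rw [two_mul]
    nth_rewrite 2 [hswap]
    ring
  have hterm : ∀ j k, 0 ≤ F j k + F k j := by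
    intro j k
    have key : ∀ a b : ι, f a ≤ f b →
        Real.exp (b₁ * f a) * Real.exp (b₂ * f b) ≤
          Real.exp (b₁ * f b) * Real.exp (b₂ * f a) := by
      intro a b hab
      rw [← Real.exp_add, ← Real.exp_add, Real.exp_le_exp]
      nlinarith
    have hpp : 0 ≤ p j * p k := mul_nonneg (hp j) (hp k)
    have hEq : F j k + F k j = p j * p k * ((f j - f k) *
        (Real.exp (b₁ * f j) * Real.exp (b₂ * f k) -
          Real.exp (b₁ * f k) * Real.exp (b₂ * f j))) := by
      simp only [hF]; ring
    rw [hEq]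
    rcases le_total (f j) (f k) with hjk | hjk
    · have := key j k hjk
      exact mul_nonneg hpp (mul_nonneg_iff.2 (Or.inr ⟨by linarith, by linarith⟩))
    · have := key k j hjk
      exact mul_nonneg hpp (mul_nonneg (by linarith) (by linarith))
  have : 0 ≤ 2 * (∑ j, ∑ k, F j k) := by
    rw [h2]
    exact Finset.sum_nonneg fun j _ => Finset.sum_nonneg fun k _ => hterm j k
  linarith

theorem tilted_expectation_antitone {ι : Type*} [Fintype ι] [Nonempty ι]
    (p : ι → ℝ) (hp0 : ∀ j, 0 < p j) (hp1 : ∑ j, p j = 1)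
    (f : ι → ℝ) (α₁ α₂ : ℝ) (h1 : 0 < α₁) (h12 : α₁ ≤ α₂) :
    let q : ℝ → ι → ℝ := fun α j => p j * Real.exp (f j / α) / ∑ k, p k * Real.exp (f k / α)
    ∑ j, q α₂ j * f j ≤ ∑ j, q α₁ j * f j := by
  intro q
  have h2 : 0 < α₂ := lt_of_lt_of_le h1 h12
  have hS : ∀ α : ℝ, 0 < ∑ k, p k * Real.exp (f k / α) := fun α =>
    Finset.sum_pos (fun k _ => mul_pos (hp0 k) (Real.exp_pos _)) Finset.univ_nonempty
  have hrw : ∀ α : ℝ, ∑ j, q α j * f j =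
      (∑ j, p j * Real.exp (f j / α) * f j) / ∑ k, p k * Real.exp (f k / α) := by
    intro α
    rw [Finset.sum_div]
    exact Finset.sum_congr rfl fun j _ => by simp [q, div_mul_eq_mul_div]
  rw [hrw, hrw, div_le_div_iff₀ (hS α₂) (hS α₁)]
  rw [Finset.sum_mul_sum, Finset.sum_mul_sum]
  rw [← sub_nonneg, ← Finset.sum_sub_distrib]
  simp only [← Finset.sum_sub_distrib]
  have hb : (α₂)⁻¹ ≤ (α₁)⁻¹ := by
    apply inv_anti₀ h1 h12
  have := key_double_sum p f (fun j => (hp0 j).le) (α₁)⁻¹ (α₂)⁻¹ hb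
  have heq : ∑ j, ∑ k, (p j * Real.exp (f j / α₁) * f j * (p k * Real.exp (f k / α₂))
        - p j * Real.exp (f j / α₂) * f j * (p k * Real.exp (f k / α₁)))
      = ∑ j, ∑ k, p j * p k * (f j - f k) *
        (Real.exp ((α₁)⁻¹ * f j) * Real.exp ((α₂)⁻¹ * f k)) := by
    have hswap : ∑ j, ∑ k, p j * Real.exp (f j / α₂) * f j * (p k * Real.exp (f k / α₁))
        = ∑ j, ∑ k, p k * Real.exp (f k / α₂) * f k * (p j * Real.exp (f j / α₁)) :=
      Finset.sum_comm
    simp only [Finset.sum_sub_distrib]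
    rw [hswap]
    rw [← Finset.sum_sub_distrib]
    simp only [← Finset.sum_sub_distrib]
    apply Finset.sum_congr rfl
    intro j _
    apply Finset.sum_congr rfl
    intro k _
    simp only [div_eq_inv_mul]
    ring
  rw [heq]
  exact this
end
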